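/- Let C₀, C₁ ⊆ ℂ² be plane algebraic curves and suppose there exist points p₁, p₂, p₃ lying on both C₀ and C₁ with d(pⱼ,pₖ) ≠ 0 for all 1 ≤ j < k ≤ 3, such that the sets {(d(p₁,q), d(p₂,q), d(p₃,q)) : q ∈ C₀} and {(d(p₁,q), d(p₂,q), d(p₃,q)) : q ∈ C₁} are equal. Then there exists h ∈ E(ℂ) with h·pᵢ = pᵢ for i = 1,2,3 such that C₀ = h·C₁ (equality of subsets of ℂ²). -/

import Mathlib

/-!
The squared distances to `p₁, p₂, p₃` determine a point of `ℂ²` up to an involution `σ ∈ E(ℂ)`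
fixing the `pᵢ`: the identity when the `pᵢ` are not collinear, and otherwise the reflection in
their common line. Hence `C₀ ⊆ C₁ ∪ σ C₁`, and since `C₀` is irreducible, the Nullstellensatz
forces `C₀ = C₁` or `C₀ = σ C₁`.
-/

open scoped Matrix

noncomputable section

/-- Squared distance between two points of `ℂ²`. -/
def sqDist (p q : ℂ × ℂ) : ℂ := (p.1 - q.1) ^ 2 + (p.2 - q.2) ^ 2

/-- A complex orthogonal 2×2 matrix: `Aᵀ A = I`. -/
def IsOrtho (A : Matrix (Fin 2) (Fin 2) ℂ) : Prop := A.transpose * A = 1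

/-- The affine map `x ↦ A x + v` on `ℂ²`. -/
def euclApply (A : Matrix (Fin 2) (Fin 2) ℂ) (v : ℂ × ℂ) (p : ℂ × ℂ) : ℂ × ℂ :=
  (A 0 0 * p.1 + A 0 1 * p.2 + v.1, A 1 0 * p.1 + A 1 1 * p.2 + v.2)

/-- A plane algebraic curve: the zero set of an irreducible polynomial of total degree `> 1`. -/
def IsPlaneCurve (C : Set (ℂ × ℂ)) : Prop :=
  ∃ f : MvPolynomial (Fin 2) ℂ, Irreducible f ∧ 1 < f.totalDegree ∧
    C = {p : ℂ × ℂ | MvPolynomial.eval ![p.1, p.2] f = 0}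

open MvPolynomial

theorem MvPolynomial.dvd_of_forall_eval_eq_zero {k σ : Type*} [Field k] [IsAlgClosed k]
    [Finite σ] {f g : MvPolynomial σ k} (hf : Irreducible f)
    (h : ∀ x, eval x f = 0 → eval x g = 0) : f ∣ g := by
  have hprime : (Ideal.span {f}).IsPrime := (Ideal.span_singleton_prime hf.ne_zero).mpr hf.prime
  rw [← Ideal.mem_span_singleton, ← hprime.radical,
    ← vanishingIdeal_zeroLocus_eq_radical (K := k), mem_vanishingIdeal_iff]
  exact fun x hx ↦ h x (mem_zeroLocus_iff.mp hx f (Ideal.mem_span_singleton_self f))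

def zeroSet (f : MvPolynomial (Fin 2) ℂ) : Set (ℂ × ℂ) := {p | eval ![p.1, p.2] f = 0}

lemma zeroSet_mul (f g : MvPolynomial (Fin 2) ℂ) : zeroSet (f * g) = zeroSet f ∪ zeroSet g := by
  ext p
  simp [zeroSet]

lemma dvd_of_zeroSet_subset {f g : MvPolynomial (Fin 2) ℂ} (hf : Irreducible f)
    (h : zeroSet f ⊆ zeroSet g) : f ∣ g :=
  dvd_of_forall_eval_eq_zero hf fun x hx ↦ by
    obtain ⟨p, rfl⟩ := (finTwoArrowEquiv ℂ).symm.surjective x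
    exact h hx

lemma zeroSet_eq_of_dvd {f g : MvPolynomial (Fin 2) ℂ} (hf : Irreducible f) (hg : Irreducible g)
    (h : f ∣ g) : zeroSet f = zeroSet g := by
  obtain ⟨c, rfl⟩ := h
  have hc : IsUnit c := (hg.isUnit_or_isUnit rfl).resolve_left hf.not_isUnit
  ext p
  simp [zeroSet, (hc.map (eval ![p.1, p.2])).ne_zero]

lemma zeroSet_eq_or_eq_of_subset_union {f g h : MvPolynomial (Fin 2) ℂ} (hf : Irreducible f)
    (hg : Irreducible g) (hh : Irreducible h) (hsub : zeroSet f ⊆ zeroSet g ∪ zeroSet h) :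
    zeroSet f = zeroSet g ∨ zeroSet f = zeroSet h := by
  rw [← zeroSet_mul] at hsub
  exact (hf.prime.dvd_or_dvd (dvd_of_zeroSet_subset hf hsub)).imp
    (zeroSet_eq_of_dvd hf hg) (zeroSet_eq_of_dvd hf hh)

def euclSubst (A : Matrix (Fin 2) (Fin 2) ℂ) (v : ℂ × ℂ) :
    MvPolynomial (Fin 2) ℂ →ₐ[ℂ] MvPolynomial (Fin 2) ℂ :=
  aeval ![C (A 0 0) * X 0 + C (A 0 1) * X 1 + C v.1, C (A 1 0) * X 0 + C (A 1 1) * X 1 + C v.2]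

lemma eval_euclSubst (A : Matrix (Fin 2) (Fin 2) ℂ) (v p : ℂ × ℂ) (f : MvPolynomial (Fin 2) ℂ) :
    eval ![p.1, p.2] (euclSubst A v f) =
      eval ![(euclApply A v p).1, (euclApply A v p).2] f := by
  rw [euclSubst, aeval_eq_bind₁, eval, eval₂Hom_bind₁]
  congr 2
  ext i
  fin_cases i <;> simp [euclApply]

lemma zeroSet_euclSubst (A : Matrix (Fin 2) (Fin 2) ℂ) (v : ℂ × ℂ) (f : MvPolynomial (Fin 2) ℂ) :
    zeroSet (euclSubst A v f) = euclApply A v ⁻¹' zeroSet f :=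
  Set.ext fun p ↦ by simp only [zeroSet, Set.mem_ofPred_eq, Set.mem_preimage, eval_euclSubst]

lemma euclSubst_euclSubst {A : Matrix (Fin 2) (Fin 2) ℂ} {v : ℂ × ℂ}
    (h : Function.Involutive (euclApply A v)) (f : MvPolynomial (Fin 2) ℂ) :
    euclSubst A v (euclSubst A v f) = f :=
  MvPolynomial.funext fun x ↦ by
    obtain ⟨p, rfl⟩ := (finTwoArrowEquiv ℂ).symm.surjective x
    exact (eval_euclSubst A v p _).trans ((eval_euclSubst A v _ f).trans (by rw [h p]; rfl))

lemma irreducible_euclSubst {A : Matrix (Fin 2) (Fin 2) ℂ} {v : ℂ × ℂ}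
    (h : Function.Involutive (euclApply A v)) {f : MvPolynomial (Fin 2) ℂ} (hf : Irreducible f) :
    Irreducible (euclSubst A v f) :=
  let e : MvPolynomial (Fin 2) ℂ ≃* MvPolynomial (Fin 2) ℂ :=
    { toFun := euclSubst A v, invFun := euclSubst A v, left_inv := euclSubst_euclSubst h,
      right_inv := euclSubst_euclSubst h, map_mul' := map_mul _ }
  hf.map e

lemma isOrtho_one : IsOrtho 1 := by
  simp [IsOrtho]

lemma euclApply_one_zero : euclApply 1 0 = id := by
  funext p
  simp [euclApply]

def cross (u w : ℂ × ℂ) : ℂ := u.1 * w.2 - u.2 * w.1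

lemma eq_of_sqDist_eq_of_cross_ne_zero {p₁ p₂ p₃ q r : ℂ × ℂ}
    (h : cross (p₂ - p₁) (p₃ - p₁) ≠ 0) (h₁ : sqDist p₁ q = sqDist p₁ r)
    (h₂ : sqDist p₂ q = sqDist p₂ r) (h₃ : sqDist p₃ q = sqDist p₃ r) : q = r := by
  simp only [cross, sqDist, Prod.fst_sub, Prod.snd_sub] at h h₁ h₂ h₃
  have e₁ : (r.1 - q.1) * ((p₂.1 - p₁.1) * (p₃.2 - p₁.2) - (p₂.2 - p₁.2) * (p₃.1 - p₁.1)) = 0 := by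
    linear_combination ((p₃.2 - p₁.2) * (h₂ - h₁) - (p₂.2 - p₁.2) * (h₃ - h₁)) / 2
  have e₂ : (r.2 - q.2) * ((p₂.1 - p₁.1) * (p₃.2 - p₁.2) - (p₂.2 - p₁.2) * (p₃.1 - p₁.1)) = 0 := by
    linear_combination ((p₂.1 - p₁.1) * (h₃ - h₁) - (p₃.1 - p₁.1) * (h₂ - h₁)) / 2
  exact Prod.ext (sub_eq_zero.mp ((mul_eq_zero.mp e₁).resolve_right h)).symm
    (sub_eq_zero.mp ((mul_eq_zero.mp e₂).resolve_right h)).symm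

/-- Reflection in the line `PQ`: `q ↦ q - 2 ⟪q - P, n⟫ / ⟪n, n⟫ • n` with normal
`n = (-(Q - P).2, (Q - P).1)`, where `⟪n, n⟫ = sqDist P Q`; the identity if `sqDist P Q = 0`. -/
def lineReflection (P Q q : ℂ × ℂ) : ℂ × ℂ :=
  let t := 2 * cross (Q - P) (q - P) / sqDist P Q
  (q.1 + t * (Q.2 - P.2), q.2 - t * (Q.1 - P.1))

lemma lineReflection_apply_of_cross_eq_zero {P Q R : ℂ × ℂ} (h : cross (Q - P) (R - P) = 0) :
    lineReflection P Q R = R := by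
  simp [lineReflection, h]

lemma lineReflection_involutive {P Q : ℂ × ℂ} (h : sqDist P Q ≠ 0) :
    Function.Involutive (lineReflection P Q) := by
  intro q
  simp only [sqDist] at h
  simp only [lineReflection, cross, sqDist, Prod.fst_sub, Prod.snd_sub]
  ext <;> field_simp <;> ring

lemma eq_or_eq_lineReflection_of_sqDist_eq {P Q q r : ℂ × ℂ} (h : sqDist P Q ≠ 0)
    (h₁ : sqDist P q = sqDist P r) (h₂ : sqDist Q q = sqDist Q r) :
    r = q ∨ r = lineReflection P Q q := by
  have hw : (Q.1 - P.1) * (r.1 - q.1) + (Q.2 - P.2) * (r.2 - q.2) = 0 := by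
    simp only [sqDist] at h₁ h₂
    linear_combination (h₂ - h₁) / 2
  -- `z = r - q` is orthogonal to the non-isotropic `u = Q - P`, so it is determined by `cross u z`,
  -- which `h₁` forces to be `0` (then `r = q`) or `-2 cross u (q - P)` (then `r` is the reflection)
  have key : cross (Q - P) (r - q) * (2 * cross (Q - P) (q - P) + cross (Q - P) (r - q)) = 0 := by
    simp only [cross, sqDist, Prod.fst_sub, Prod.snd_sub] at h₁ ⊢
    linear_combination -((Q.1 - P.1) ^ 2 + (Q.2 - P.2) ^ 2) * h₁ -
      ((Q.1 - P.1) * (q.1 + r.1 - 2 * P.1) + (Q.2 - P.2) * (q.2 + r.2 - 2 * P.2)) * hw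
  simp only [lineReflection, cross, Prod.fst_sub, Prod.snd_sub] at key ⊢
  rcases mul_eq_zero.mp key with hs | hs
  · left
    refine Prod.ext (mul_left_cancel₀ h ?_) (mul_left_cancel₀ h ?_) <;> simp only [sqDist]
    · linear_combination (Q.1 - P.1) * hw - (Q.2 - P.2) * hs
    · linear_combination (Q.2 - P.2) * hw + (Q.1 - P.1) * hs
  · right
    refine Prod.ext ?_ ?_ <;> field_simp <;> simp only [sqDist]
    · linear_combination (Q.1 - P.1) * hw - (Q.2 - P.2) * hs
    · linear_combination (Q.2 - P.2) * hw + (Q.1 - P.1) * hs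

lemma isOrtho_reflection_matrix {a b : ℂ} (hab : a ^ 2 + b ^ 2 = 1) :
    IsOrtho !![a, b; b, -a] := by
  rw [IsOrtho, Matrix.eta_fin_two !![a, b; b, -a]ᵀ, Matrix.mul_fin_two, Matrix.one_fin_two]
  simp only [Fin.isValue, Matrix.transpose_apply, Matrix.of_apply, Matrix.cons_val',
    Matrix.cons_val_zero, Matrix.cons_val_fin_one, Matrix.cons_val_one, mul_neg, neg_mul, neg_neg,
    EmbeddingLike.apply_eq_iff_eq, Matrix.vecCons_inj, and_true]
  exact ⟨⟨by linear_combination hab, by ring⟩, by ring, by linear_combination hab⟩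

lemma exists_isOrtho_euclApply_eq_lineReflection {P Q : ℂ × ℂ} (h : sqDist P Q ≠ 0) :
    ∃ A v, IsOrtho A ∧ euclApply A v = lineReflection P Q := by
  set a := ((Q.1 - P.1) ^ 2 - (Q.2 - P.2) ^ 2) / sqDist P Q
  set b := 2 * (Q.1 - P.1) * (Q.2 - P.2) / sqDist P Q
  refine ⟨!![a, b; b, -a], (P.1 - a * P.1 - b * P.2, P.2 - b * P.1 + a * P.2),
    isOrtho_reflection_matrix ?_, ?_⟩
  · simp only [a, b, sqDist] at h ⊢
    field_simp
    ring
  · funext q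
    simp only [sqDist] at h
    simp only [euclApply, lineReflection, cross, a, b, sqDist, Prod.fst_sub, Prod.snd_sub,
      Matrix.of_apply, Matrix.cons_val', Matrix.cons_val_zero, Matrix.cons_val_fin_one,
      Matrix.cons_val_one]
    refine Prod.ext ?_ ?_ <;> field_simp <;> ring

lemma exists_involution_sqDist_fibers {p₁ p₂ : ℂ × ℂ} (p₃ : ℂ × ℂ) (h : sqDist p₁ p₂ ≠ 0) :
    ∃ A v, IsOrtho A ∧ Function.Involutive (euclApply A v) ∧
      euclApply A v p₁ = p₁ ∧ euclApply A v p₂ = p₂ ∧ euclApply A v p₃ = p₃ ∧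
      ∀ q r, (sqDist p₁ q, sqDist p₂ q, sqDist p₃ q) = (sqDist p₁ r, sqDist p₂ r, sqDist p₃ r) →
        r = q ∨ r = euclApply A v q := by
  by_cases hcol : cross (p₂ - p₁) (p₃ - p₁) = 0
  · obtain ⟨A, v, hA, hAv⟩ := exists_isOrtho_euclApply_eq_lineReflection h
    refine ⟨A, v, hA, ?_⟩
    rw [hAv]
    refine ⟨lineReflection_involutive h, lineReflection_apply_of_cross_eq_zero (by simp [cross]),
      lineReflection_apply_of_cross_eq_zero (by simp [cross, mul_comm]),
      lineReflection_apply_of_cross_eq_zero hcol, fun q r hqr ↦ ?_⟩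
    simp only [Prod.mk.injEq] at hqr
    exact eq_or_eq_lineReflection_of_sqDist_eq h hqr.1 hqr.2.1
  · refine ⟨1, 0, isOrtho_one, ?_⟩
    rw [euclApply_one_zero]
    refine ⟨fun _ ↦ rfl, rfl, rfl, rfl, fun q r hqr ↦ ?_⟩
    simp only [Prod.mk.injEq] at hqr
    exact Or.inl (eq_of_sqDist_eq_of_cross_ne_zero hcol hqr.1 hqr.2.1 hqr.2.2).symm

theorem curves_equal_of_three_point_slice_general (C₀ C₁ : Set (ℂ × ℂ))
    (hC₀ : IsPlaneCurve C₀) (hC₁ : IsPlaneCurve C₁)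
    (p₁ p₂ p₃ : ℂ × ℂ)
    (hd₁₂ : sqDist p₁ p₂ ≠ 0)
    (hslice : {x : ℂ × ℂ × ℂ | ∃ q ∈ C₀, x = (sqDist p₁ q, sqDist p₂ q, sqDist p₃ q)} =
              {x : ℂ × ℂ × ℂ | ∃ q ∈ C₁, x = (sqDist p₁ q, sqDist p₂ q, sqDist p₃ q)}) :
    ∃ (A : Matrix (Fin 2) (Fin 2) ℂ) (v : ℂ × ℂ), IsOrtho A ∧
      euclApply A v p₁ = p₁ ∧ euclApply A v p₂ = p₂ ∧ euclApply A v p₃ = p₃ ∧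
      C₀ = euclApply A v '' C₁ := by
  obtain ⟨f, hf, -, rfl⟩ := hC₀
  obtain ⟨g, hg, -, rfl⟩ := hC₁
  obtain ⟨A, v, hA, hinv, h₁, h₂, h₃, hfib⟩ := exists_involution_sqDist_fibers p₃ hd₁₂
  have hsub : zeroSet f ⊆ zeroSet g ∪ zeroSet (euclSubst A v g) := by
    intro q hq
    obtain ⟨r, hr, hqr⟩ := hslice.subset ⟨q, hq, rfl⟩
    rw [zeroSet_euclSubst]
    rcases hfib q r hqr with rfl | rfl
    exacts [Or.inl hr, Or.inr hr]
  rcases zeroSet_eq_or_eq_of_subset_union hf hg (irreducible_euclSubst hinv hg) hsub with h | h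
  · refine ⟨1, 0, isOrtho_one, ?_⟩
    rw [euclApply_one_zero, Set.image_id]
    exact ⟨rfl, rfl, rfl, h⟩
  · refine ⟨A, v, hA, h₁, h₂, h₃, ?_⟩
    rw [hinv.image_eq_preimage_symm]
    exact h.trans (zeroSet_euclSubst A v g)

theorem curves_equal_of_three_point_slice (C₀ C₁ : Set (ℂ × ℂ))
    (hC₀ : IsPlaneCurve C₀) (hC₁ : IsPlaneCurve C₁)
    (p₁ p₂ p₃ : ℂ × ℂ)
    (hp₁₀ : p₁ ∈ C₀) (hp₁₁ : p₁ ∈ C₁) (hp₂₀ : p₂ ∈ C₀) (hp₂₁ : p₂ ∈ C₁)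
    (hp₃₀ : p₃ ∈ C₀) (hp₃₁ : p₃ ∈ C₁)
    (hd₁₂ : sqDist p₁ p₂ ≠ 0) (hd₁₃ : sqDist p₁ p₃ ≠ 0) (hd₂₃ : sqDist p₂ p₃ ≠ 0)
    (hslice : {x : ℂ × ℂ × ℂ | ∃ q ∈ C₀, x = (sqDist p₁ q, sqDist p₂ q, sqDist p₃ q)} =
              {x : ℂ × ℂ × ℂ | ∃ q ∈ C₁, x = (sqDist p₁ q, sqDist p₂ q, sqDist p₃ q)}) :
    ∃ (A : Matrix (Fin 2) (Fin 2) ℂ) (v : ℂ × ℂ), IsOrtho A ∧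
      euclApply A v p₁ = p₁ ∧ euclApply A v p₂ = p₂ ∧ euclApply A v p₃ = p₃ ∧
      C₀ = euclApply A v '' C₁ :=
  curves_equal_of_three_point_slice_general C₀ C₁ hC₀ hC₁ p₁ p₂ p₃ hd₁₂ hslice
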